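/- arXiv:2504.06700 — 3 statements merged into one kernel-verified Lean document; each statement's English description precedes it below -/
import Mathlib

section
/- Let P ⊆ V, v ∈ P with max_{u∈P} x(v,u) ≥ 1/2, and let (Q1, Q2) with v ∈ Q1 be the pair returned by One-Half-Refine-Cut(P, v, x). Then Σ over pairs {i,j} ∈ NFPrs₀(Q1,Q2) with i ∈ Q1 and j ∈ Q2 ∩ B_{3/4} of ( min(x(v,j), 1/2) − x(v,i) ) is at least (1/4) times the number of such pairs. -/
open Finset
open scoped Classical

/-- `cutBall x v P r` is the set of elements of `P` at distance `< r` from `v`. -/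
noncomputable def cutBall {V : Type*} [DecidableEq V]
    (x : V → V → ℝ) (v : V) (P : Finset V) (r : ℝ) : Finset V :=
  P.filter fun u => x v u < r

/-- The procedure One-Half-Refine-Cut: it returns `({v}, P ∖ {v})` if
`Σ_{q∈B_{1/2}} x(v,q) ≥ (1/2)|B_{1/2}| − (1/4)|B_{3/4}| − 1/4`,
and `(B_{1/2}, P ∖ B_{1/2})` otherwise. -/
noncomputable def oneHalfCut {V : Type*} [DecidableEq V]
    (x : V → V → ℝ) (P : Finset V) (v : V) : Finset V × Finset V :=
  if (1 / 2 : ℝ) * (cutBall x v P (1 / 2)).card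
        - (1 / 4) * (cutBall x v P (3 / 4)).card - 1 / 4
      ≤ ∑ q ∈ cutBall x v P (1 / 2), x v q
  then ({v}, P \ {v})
  else (cutBall x v P (1 / 2), P \ cutBall x v P (1 / 2))

/-!
If the test succeeds, the cut pairs are `(v, j)` with `j ∈ B_{3/4} ∖ {v}`, all unsaturated, and
`∑_{j ∈ B_{3/4}} (min(x(v,j), 1/2) − 1/4) = ∑_{B_{1/2}} x(v,·) + |B_{3/4}|/4 − |B_{1/2}|/2`,
which the test bounds below by `−1/4`, exactly the contribution of `j = v`.

If it fails, fix `j ∈ B_{3/4} ∖ B_{1/2}`: the terms are `1/4 − x(v,i)` for `i ∈ B_{1/2}`, and the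
failed test (with `|B_{1/2}| ≤ |B_{3/4}|`) makes `∑_{i ∈ B_{1/2}} (1/4 − x(v,i))` positive. A pair
saturated at `j` has `x(v,i) ≥ 1 − x(v,j) > 1/4`, so discarding it only increases the sum.
-/

lemma mul_card_le_sum_iff_sum_sub_nonneg {ι : Type*} (s : Finset ι) (f : ι → ℝ) (c : ℝ) :
    c * #s ≤ ∑ i ∈ s, f i ↔ 0 ≤ ∑ i ∈ s, (f i - c) := by
  rw [sum_sub_distrib, sum_const, nsmul_eq_mul, sub_nonneg, mul_comm]

/-- By the triangle inequality through `v`, every `i` with `x i j ≥ 1` has `x v i ≥ c`. -/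
lemma sum_filter_lt_one_nonneg {V : Type*} (x : V → V → ℝ) (v : V) (hsym : ∀ u w, x u w = x w u)
    (htri : ∀ u w p, x u w ≤ x u p + x p w) {c : ℝ} {S : Finset V} {j : V}
    (hj : x v j ≤ 1 - c) (hS : 0 ≤ ∑ i ∈ S, (c - x v i)) :
    0 ≤ ∑ i ∈ S.filter (fun i => x i j < 1), (c - x v i) := by
  refine hS.trans <| sum_le_sum_of_subset_of_nonpos' (filter_subset _ S) fun i hi hij => ?_
  have hsat : 1 ≤ x i j := not_lt.1 fun hlt => hij (mem_filter.2 ⟨hi, hlt⟩)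
  linarith [htri i j v, hsym i v]

section
variable {V : Type*} [DecidableEq V] (x : V → V → ℝ) (v : V) (P : Finset V)

@[simp]
lemma mem_cutBall {r : ℝ} {u : V} : u ∈ cutBall x v P r ↔ u ∈ P ∧ x v u < r := mem_filter

lemma cutBall_mono {r s : ℝ} (h : r ≤ s) : cutBall x v P r ⊆ cutBall x v P s :=
  monotone_filter_right P fun _ _ hu => hu.trans_le h

lemma sum_cutBall_min {r s : ℝ} (h : r ≤ s) :
    ∑ q ∈ cutBall x v P s, min (x v q) r
      = ∑ q ∈ cutBall x v P r, x v q + r * (#(cutBall x v P s) - #(cutBall x v P r)) := by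
  have hsub := cutBall_mono x v P h
  rw [← sum_sdiff hsub, add_comm]
  congr 1
  · exact sum_congr rfl fun q hq => min_eq_left ((mem_cutBall x v P).1 hq).2.le
  · rw [← Nat.cast_sub (card_le_card hsub), ← card_sdiff_of_subset hsub, mul_comm,
      ← nsmul_eq_mul, ← sum_const]
    refine sum_congr rfl fun q hq => min_eq_right ?_
    simp only [mem_sdiff, mem_cutBall] at hq
    exact not_lt.1 fun hlt => hq.2 ⟨hq.1.1, hlt⟩

lemma oneHalfCut_singleton_sum_nonneg (hdiag : x v v = 0) (hv : v ∈ P)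
    (hcond : (1 / 2 : ℝ) * #(cutBall x v P (1 / 2)) - (1 / 4) * #(cutBall x v P (3 / 4)) - 1 / 4
      ≤ ∑ q ∈ cutBall x v P (1 / 2), x v q) :
    0 ≤ ∑ p ∈ (({v} : Finset V) ×ˢ ((P \ {v}) ∩ cutBall x v P (3 / 4))).filter
        (fun p => x p.1 p.2 < 1), (min (x v p.2) (1 / 2) - x v p.1 - 1 / 4) := by
  have hvB : v ∈ cutBall x v P (3 / 4) := (mem_cutBall x v P).2 ⟨hv, by norm_num [hdiag]⟩
  have hQ2 : (P \ {v}) ∩ cutBall x v P (3 / 4) = (cutBall x v P (3 / 4)).erase v := by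
    ext u
    simp only [mem_inter, mem_sdiff, mem_singleton, mem_erase, mem_cutBall]
    tauto
  have hunsat : (({v} : Finset V) ×ˢ (cutBall x v P (3 / 4)).erase v).filter
      (fun p => x p.1 p.2 < 1) = {v} ×ˢ (cutBall x v P (3 / 4)).erase v := by
    refine filter_true_of_mem fun p hp => ?_
    obtain ⟨hp1, hp2⟩ := mem_product.1 hp
    rw [mem_singleton.1 hp1]
    linarith [((mem_cutBall x v P).1 (mem_of_mem_erase hp2)).2]
  rw [hQ2, hunsat, sum_product, sum_singleton]
  simp only [hdiag, sub_zero]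
  have hball := sum_cutBall_min x v P (r := 1 / 2) (s := 3 / 4) (by norm_num)
  have hsum : ∑ q ∈ cutBall x v P (3 / 4), (min (x v q) (1 / 2) - 1 / 4)
      = ∑ q ∈ cutBall x v P (1 / 2), x v q + 1 / 4 * #(cutBall x v P (3 / 4))
        - 1 / 2 * #(cutBall x v P (1 / 2)) := by
    rw [sum_sub_distrib, sum_const, nsmul_eq_mul, hball]
    ring
  rw [← sum_erase_add _ _ hvB, hdiag, min_eq_left (by norm_num)] at hsum
  linarith

lemma oneHalfCut_ball_sum_nonneg (hsym : ∀ u w, x u w = x w u)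
    (htri : ∀ u w p, x u w ≤ x u p + x p w)
    (hcond : ¬ (1 / 2 : ℝ) * #(cutBall x v P (1 / 2)) - (1 / 4) * #(cutBall x v P (3 / 4)) - 1 / 4
      ≤ ∑ q ∈ cutBall x v P (1 / 2), x v q) :
    0 ≤ ∑ p ∈ (cutBall x v P (1 / 2) ×ˢ ((P \ cutBall x v P (1 / 2)) ∩ cutBall x v P (3 / 4))).filter
        (fun p => x p.1 p.2 < 1), (min (x v p.2) (1 / 2) - x v p.1 - 1 / 4) := by
  have hcard : (#(cutBall x v P (1 / 2)) : ℝ) ≤ #(cutBall x v P (3 / 4)) := by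
    exact_mod_cast card_le_card (cutBall_mono x v P (by norm_num))
  have hball : 0 ≤ ∑ i ∈ cutBall x v P (1 / 2), (1 / 4 - x v i) := by
    rw [sum_sub_distrib, sum_const, nsmul_eq_mul]
    linarith [not_le.1 hcond]
  rw [sum_filter, sum_product_right]
  refine sum_nonneg fun j hj => ?_
  simp only [mem_inter, mem_sdiff, mem_cutBall, not_and, not_lt] at hj
  obtain ⟨⟨hjP, hjfar⟩, -, hjnear⟩ := hj
  have hmin : min (x v j) (1 / 2) = 1 / 2 := min_eq_right (hjfar hjP)
  calc (0 : ℝ)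
      ≤ ∑ i ∈ (cutBall x v P (1 / 2)).filter (fun i => x i j < 1), (1 / 4 - x v i) :=
        sum_filter_lt_one_nonneg x v hsym htri (by linarith) hball
    _ = _ := by
        rw [sum_filter]
        congr! 2
        rw [hmin]
        ring

end

theorem stmt9_general {V : Type*} [DecidableEq V]
    (x : V → V → ℝ)
    (hsym : ∀ u w, x u w = x w u) (hdiag : ∀ u, x u u = 0)
    (htri : ∀ u w p, x u w ≤ x u p + x p w)
    (P : Finset V) (v : V) (hv : v ∈ P)
    (Q1 Q2 : Finset V) (hcut : (Q1, Q2) = oneHalfCut x P v) :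
    (1 / 4 : ℝ) *
        ((Q1 ×ˢ (Q2 ∩ cutBall x v P (3 / 4))).filter
            (fun p => x p.1 p.2 < 1)).card
      ≤ ∑ p ∈ (Q1 ×ˢ (Q2 ∩ cutBall x v P (3 / 4))).filter
            (fun p => x p.1 p.2 < 1),
          (min (x v p.2) (1 / 2) - x v p.1) := by
  rw [mul_card_le_sum_iff_sum_sub_nonneg]
  unfold oneHalfCut at hcut
  split_ifs at hcut with hcond <;> obtain ⟨rfl, rfl⟩ := Prod.mk.inj hcut
  · exact oneHalfCut_singleton_sum_nonneg x v P (hdiag v) hv hcond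
  · exact oneHalfCut_ball_sum_nonneg x v P hsym htri hcond

/-- Average distance of unsaturated cut pairs for One-Half-Refine-Cut
(Lemma A.3): for the pair `(Q1, Q2)` returned by the procedure, the sum of
`min(x(v,j), 1/2) − x(v,i)` over the non-extreme (unsaturated) cut pairs
`{i,j}` with `i ∈ Q1` and `j ∈ Q2 ∩ B_{3/4}` is at least `1/4` times the number
of such pairs. -/
theorem stmt9 {V : Type*} [Fintype V] [DecidableEq V]
    (x : V → V → ℝ)
    (hsym : ∀ u w, x u w = x w u) (hdiag : ∀ u, x u u = 0)
    (hnn : ∀ u w, 0 ≤ x u w) (hub : ∀ u w, x u w ≤ 1)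
    (htri : ∀ u w p, x u w ≤ x u p + x p w)
    (P : Finset V) (v : V) (hv : v ∈ P) (hmax : ∃ u ∈ P, 1 / 2 ≤ x v u)
    (Q1 Q2 : Finset V) (hcut : (Q1, Q2) = oneHalfCut x P v) :
    (1 / 4 : ℝ) *
        ((Q1 ×ˢ (Q2 ∩ cutBall x v P (3 / 4))).filter
            (fun p => x p.1 p.2 < 1)).card
      ≤ ∑ p ∈ (Q1 ×ˢ (Q2 ∩ cutBall x v P (3 / 4))).filter
            (fun p => x p.1 p.2 < 1),
          (min (x v p.2) (1 / 2) - x v p.1) :=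
  stmt9_general x hsym hdiag htri P v hv Q1 Q2 hcut
end

section
/- Let x be a feasible solution of LP-(L0), fix a layer t, let P ⊆ V and v ∈ P with max_{u∈P} x^(t)(v,u) ≥ 1/2, and let (Q1, Q2) with v ∈ Q1 be the pair returned by One-Half-Refine-Cut(P, v, x^(t)); set Q2' := Q2 ∩ B_{3/4}. Then Σ_{ {i,j}∈NFPrs₀(Q1,Q2), {i,j}∈E^(t) } x^(t)(i,j) + Σ_{ {i,j}∈NFPrs₀(Q1,Q2), {i,j}∈NE^(t) } (1 − x^(t)(i,j)) + (1/4)·|{ {i,j}∈NFPrs₀(Q1,Q2) : i∈Q1, j∈Q2', {i,j}∈NE^(t) }| ≥ Σ_{ {i,j}∈NFPrs₀(Q1,Q2), i∈Q1, j∈Q2' } ( min(x^(t)(v,j),1/2) − x^(t)(v,i) ) + Σ_{ {i,j}∈NFPrs₀(Q1,Q2), i∈Q1, j∈Q2∖Q2', {i,j}∈E^(t) } x^(t)(i,j). -/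
/-! The inequality holds pair by pair, using only the triangle inequality at layer `t`. For a
pair `(i, j)` with `x(i,j) < 1` in `E^(t)`, `min(x(v,j), 1/2) - x(v,i) ≤ x(v,j) - x(v,i) ≤ x(i,j)`.
For such a pair in `NE^(t)` with `j ∈ B_{3/4}`, `x(i,j) ≤ x(v,i) + x(v,j) < x(v,i) + 3/4`, so
`1 - x(i,j) + 1/4 > 1/2 - x(v,i)`. Pairs with `j ∉ B_{3/4}` are charged at most their own cost. -/

open Finset
open scoped Classical

/-- Feasibility for LP-(L0), with the layer functions given as symmetric
functions on ordered pairs: each layer `t ∈ {1,…,ℓ}` is symmetric, vanishes on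
the diagonal, takes values in `[0,1]` and satisfies the triangle inequality;
the values are monotone non-increasing bottom-up, and the convention
`x^(ℓ+1) := 0` holds. -/
def LPL0FeasibleFn {V : Type*} (ℓ : ℕ) (x : ℕ → V → V → ℝ) : Prop :=
  (∀ t ∈ Finset.Icc 1 ℓ, ∀ u w : V, x t u w = x t w u) ∧
  (∀ t ∈ Finset.Icc 1 ℓ, ∀ u : V, x t u u = 0) ∧
  (∀ t ∈ Finset.Icc 1 ℓ, ∀ u w p : V, x t u w ≤ x t u p + x t p w) ∧
  (∀ t ∈ Finset.Icc 1 ℓ, ∀ u w : V, 0 ≤ x t u w ∧ x t u w ≤ 1) ∧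
  (∀ t, 1 ≤ t → t < ℓ → ∀ u w : V, x (t + 1) u w ≤ x t u w) ∧
  (∀ u w : V, x (ℓ + 1) u w = 0)

theorem pair_charge_le_cost {a b c : ℝ} (hc : c < 1) (hb : b ≤ a + c) (hc' : c ≤ a + b)
    (s t : ℕ) (near : Prop) [Decidable near] (hnear : near → b < 3 / 4) :
    (if near then min b (1 / 2) - a else 0) + (if ¬near ∧ s < t then c else 0)
      ≤ (if s < t then c else 0) + (if t ≤ s then 1 - c else 0)
        + 1 / 4 * (if near ∧ t ≤ s then 1 else 0) := by
  have := min_le_left b (1 / 2)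
  have := min_le_right b (1 / 2)
  have hst_iff : ¬s < t ↔ t ≤ s := not_lt
  by_cases hn : near
  · have := hnear hn
    by_cases hst : s < t <;>
      simp only [hn, hst, ← hst_iff, not_true_eq_false, not_false_eq_true, and_true, and_false,
        ↓reduceIte] <;> linarith
  · by_cases hst : s < t <;>
      simp only [hn, hst, ← hst_iff, not_true_eq_false, not_false_eq_true, and_true, and_false,
        ↓reduceIte] <;> linarith

theorem stmt10_general {V : Type*} [DecidableEq V]
    (ℓ : ℕ)
    (x : ℕ → V → V → ℝ) (hfeas : LPL0FeasibleFn ℓ x)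
    (tlay : V → V → ℕ)
    (t : ℕ) (ht : t ∈ Finset.Icc 1 ℓ)
    (P : Finset V) (v : V)
    (Q1 Q2 : Finset V) :
    (∑ p ∈ (Q1 ×ˢ Q2).filter
          (fun p => x t p.1 p.2 < 1 ∧ tlay p.1 p.2 < t),
        x t p.1 p.2)
      + (∑ p ∈ (Q1 ×ˢ Q2).filter
            (fun p => x t p.1 p.2 < 1 ∧ t ≤ tlay p.1 p.2),
          (1 - x t p.1 p.2))
      + (1 / 4 : ℝ) *
          ((Q1 ×ˢ (Q2 ∩ cutBall (x t) v P (3 / 4))).filter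
            (fun p => x t p.1 p.2 < 1 ∧ t ≤ tlay p.1 p.2)).card
    ≥ (∑ p ∈ (Q1 ×ˢ (Q2 ∩ cutBall (x t) v P (3 / 4))).filter
            (fun p => x t p.1 p.2 < 1),
          (min (x t v p.2) (1 / 2) - x t v p.1))
      + ∑ p ∈ (Q1 ×ˢ (Q2 \ (Q2 ∩ cutBall (x t) v P (3 / 4)))).filter
            (fun p => x t p.1 p.2 < 1 ∧ tlay p.1 p.2 < t),
          x t p.1 p.2 := by
  obtain ⟨hsym, -, htri, -, -, -⟩ := hfeas
  set B := cutBall (x t) v P (3 / 4)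
  rw [sdiff_inter_self_left, ← filter_mem_eq_inter, ← filter_notMem_eq_sdiff,
    ← filter_product_right, ← filter_product_right]
  simp only [filter_filter, sum_filter, card_filter]
  push_cast
  rw [mul_sum, ← sum_add_distrib, ← sum_add_distrib, ← sum_add_distrib, ge_iff_le]
  refine sum_le_sum fun ⟨i, j⟩ _ => ?_
  by_cases hx : x t i j < 1
  · simp only [hx, true_and, and_true]
    have hvij : x t v j ≤ x t v i + x t i j := htri t ht v j i
    have hijv : x t i j ≤ x t v i + x t v j := hsym t ht v i ▸ htri t ht i j v
    exact pair_charge_le_cost hx hvij hijv _ t (j ∈ B) fun hj => (mem_filter.mp hj).2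
  · simp [hx]

/-- Lemma A.4: for a feasible LP-(L0) solution `x`, a layer `t`, and the pair
`(Q1, Q2)` returned by One-Half-Refine-Cut at layer `t` (with `Q2' = Q2 ∩ B_{3/4}`):
`Σ_{NFPrs₀∩E^(t)} x^(t)(i,j) + Σ_{NFPrs₀∩NE^(t)} (1 − x^(t)(i,j))
  + (1/4)|{(i,j)∈NFPrs₀ : i∈Q1, j∈Q2', {i,j}∈NE^(t)}|
  ≥ Σ_{(i,j)∈NFPrs₀, i∈Q1, j∈Q2'} (min(x^(t)(v,j),1/2) − x^(t)(v,i))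
  + Σ_{(i,j)∈NFPrs₀, i∈Q1, j∈Q2∖Q2', {i,j}∈E^(t)} x^(t)(i,j)`,
where `E^(t) = {{u,v} : t_{u,v} < t}` and `NE^(t) = {{u,v} : t_{u,v} ≥ t}`. -/
theorem stmt10 {V : Type*} [Fintype V] [DecidableEq V]
    (ℓ : ℕ) (hℓ : 1 ≤ ℓ)
    (x : ℕ → V → V → ℝ) (hfeas : LPL0FeasibleFn ℓ x)
    (tlay : V → V → ℕ) (htsym : ∀ u w, tlay u w = tlay w u)
    (htrange : ∀ u w : V, u ≠ w → tlay u w ∈ Finset.Icc 1 ℓ)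
    (t : ℕ) (ht : t ∈ Finset.Icc 1 ℓ)
    (P : Finset V) (v : V) (hv : v ∈ P) (hmax : ∃ u ∈ P, 1 / 2 ≤ x t v u)
    (Q1 Q2 : Finset V) (hcut : (Q1, Q2) = oneHalfCut (x t) P v) :
    (∑ p ∈ (Q1 ×ˢ Q2).filter
          (fun p => x t p.1 p.2 < 1 ∧ tlay p.1 p.2 < t),
        x t p.1 p.2)
      + (∑ p ∈ (Q1 ×ˢ Q2).filter
            (fun p => x t p.1 p.2 < 1 ∧ t ≤ tlay p.1 p.2),
          (1 - x t p.1 p.2))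
      + (1 / 4 : ℝ) *
          ((Q1 ×ˢ (Q2 ∩ cutBall (x t) v P (3 / 4))).filter
            (fun p => x t p.1 p.2 < 1 ∧ t ≤ tlay p.1 p.2)).card
    ≥ (∑ p ∈ (Q1 ×ˢ (Q2 ∩ cutBall (x t) v P (3 / 4))).filter
            (fun p => x t p.1 p.2 < 1),
          (min (x t v p.2) (1 / 2) - x t v p.1))
      + ∑ p ∈ (Q1 ×ˢ (Q2 \ (Q2 ∩ cutBall (x t) v P (3 / 4)))).filter
            (fun p => x t p.1 p.2 < 1 ∧ tlay p.1 p.2 < t),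
          x t p.1 p.2 :=
  stmt10_general ℓ x hfeas tlay t ht P v Q1 Q2
end

section
/- Let x be a feasible solution of LP-(L0), fix a layer t, let P ⊆ V and v ∈ P with max_{u∈P} x^(t)(v,u) ≥ 1/2, and let (Q1, Q2) be the pair returned by One-Half-Refine-Cut(P, v, x^(t)). Then Σ_{ {i,j}∈NFPrs₀(Q1,Q2) } Val_{i,j} + (1/4)·|{ {i,j} ∈ NFPrs₀(Q1,Q2) : {i,j} ∈ NFbd }| ≥ (1/4)·|NFPrs₀(Q1,Q2)|, where Val_{i,j} := (1 − x^(t_{i,j})(i,j)) + x^(t_{i,j}+1)(i,j) and NFbd := {{i,j} : x^(t_{i,j})(i,j) < 1}. -/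
open Finset
open scoped Classical

/-!
Subtracting the right side from the left leaves a sum over the cut pairs of the surplus
`Val_{ij} + 1/4·[x^(t_{ij})(i,j) < 1] - 1/4` (zero on saturated pairs). Since the layers decrease,
a pair at layer-`t` distance `y < 1` has surplus at least `1 - y` if `t ≤ t_{ij}` (it is then
unsaturated in its own layer too) and at least `y - 1/4` otherwise (as `x^(t_{ij}+1) ≥ y`), so
in every case at least `min (y - 1/4) (1 - y)`.

For the cut `({v}, P ∖ {v})` this bound dominates `(y - 1/2)·[y < 1/2] + 1/4·[y < 3/4]` with
`y = x(v,j)`, whose sum over `P ∖ {v}` is nonnegative precisely by the branch condition. For the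
cut at the ball `B_{1/2}`, the triangle inequality through `v` bounds the pair `(i, j)` below by
`1/4 - x(v,i)` when `x(v,j) < 3/4` and by `0` otherwise, and the failed branch condition together
with `|B_{1/2}| ≤ |B_{3/4}|` makes `Σ_{i∈B_{1/2}} (1/4 - x(v,i))` positive.
-/

namespace LPL0FeasibleFn

variable {V : Type*} {ℓ : ℕ} {x : ℕ → V → V → ℝ}

lemma le_of_le_layer (hfeas : LPL0FeasibleFn ℓ x) {a c : ℕ} (ha : 1 ≤ a) (hac : a ≤ c)
    (hc : c ≤ ℓ) (u w : V) : x c u w ≤ x a u w := by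
  induction c, hac using Nat.le_induction with
  | base => exact le_rfl
  | succ n hn ih => exact (hfeas.2.2.2.2.1 n (ha.trans hn) (by omega) u w).trans (ih (by omega))

lemma nonneg_succ_layer (hfeas : LPL0FeasibleFn ℓ x) {τ : ℕ} (hτ : τ ∈ Icc 1 ℓ) (u w : V) :
    0 ≤ x (τ + 1) u w := by
  rw [mem_Icc] at hτ
  rcases hτ.2.eq_or_lt with h | h
  · rw [h, hfeas.2.2.2.2.2]
  · exact (hfeas.2.2.2.1 (τ + 1) (mem_Icc.mpr ⟨by omega, h⟩) u w).1

end LPL0FeasibleFn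

section CutBound

variable {V : Type*} [DecidableEq V] (d D : V → V → ℝ) {P : Finset V} {v : V}

lemma half_cut_weight_le {y : ℝ} (hy : y ≤ 1) :
    ((if y < 1 / 2 then y - 1 / 2 else 0) + if y < 3 / 4 then 1 / 4 else 0)
      ≤ min (y - 1 / 4) (1 - y) := by
  split_ifs <;> rw [le_min_iff] <;> constructor <;> linarith

theorem sum_singleton_cut_nonneg (hv : v ∈ P) (hvv : d v v = 0) (hle : ∀ w, d v w ≤ 1)
    (hD : ∀ w, v ≠ w → min (d v w - 1 / 4) (1 - d v w) ≤ D v w)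
    (hC : 1 / 2 * (#(cutBall d v P (1 / 2)) : ℝ) - 1 / 4 * #(cutBall d v P (3 / 4)) - 1 / 4
      ≤ ∑ q ∈ cutBall d v P (1 / 2), d v q) :
    0 ≤ ∑ j ∈ P \ {v}, D v j := by
  set g : V → ℝ := fun j =>
    (if d v j < 1 / 2 then d v j - 1 / 2 else 0) + if d v j < 3 / 4 then 1 / 4 else 0
  have hsum_g : ∑ j ∈ P, g j = ∑ q ∈ cutBall d v P (1 / 2), d v q
      - 1 / 2 * #(cutBall d v P (1 / 2)) + 1 / 4 * #(cutBall d v P (3 / 4)) := by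
    simp only [g, cutBall, sum_add_distrib, ← sum_filter, sum_sub_distrib, sum_const,
      nsmul_eq_mul]
    ring
  have hg_v : g v = -1 / 4 := by norm_num [g, hvv]
  calc (0 : ℝ) ≤ ∑ j ∈ P.erase v, g j := by
        linarith [sum_erase_add P g hv]
    _ ≤ ∑ j ∈ P \ {v}, D v j := by
        rw [sdiff_singleton_eq_erase]
        refine sum_le_sum fun j hj => (half_cut_weight_le (hle j)).trans (hD j ?_)
        exact (ne_of_mem_erase hj).symm

lemma ball_cut_weight_of_lt {a b y : ℝ} (hb : 1 / 2 ≤ b) (hb' : b < 3 / 4) (hlo : b ≤ a + y)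
    (hhi : y ≤ a + b) : 1 / 4 - a ≤ min (y - 1 / 4) (1 - y) :=
  le_min (by linarith) (by linarith)

lemma ball_cut_weight_of_ge {a b y : ℝ} (ha : a < 1 / 2) (hb : 3 / 4 ≤ b) (hlo : b ≤ a + y)
    (hy : y ≤ 1) : 0 ≤ min (y - 1 / 4) (1 - y) :=
  le_min (by linarith) (by linarith)

theorem sum_ball_cut_nonneg (hsymm : ∀ u w, d u w = d w u)
    (htri : ∀ u w p, d u w ≤ d u p + d p w) (hle : ∀ u w, d u w ≤ 1)
    (hD : ∀ u w, u ≠ w → min (d u w - 1 / 4) (1 - d u w) ≤ D u w)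
    (hC : ∑ q ∈ cutBall d v P (1 / 2), d v q
      < 1 / 2 * (#(cutBall d v P (1 / 2)) : ℝ) - 1 / 4 * #(cutBall d v P (3 / 4)) - 1 / 4) :
    0 ≤ ∑ i ∈ cutBall d v P (1 / 2), ∑ j ∈ P \ cutBall d v P (1 / 2), D i j := by
  have hball_mono : #(cutBall d v P (1 / 2)) ≤ #(cutBall d v P (3 / 4)) :=
    card_le_card <| monotone_filter_right P fun u _ (hu : d v u < 1 / 2) => by linarith
  rw [sum_comm]
  refine sum_nonneg fun j hj => ?_
  obtain ⟨hjP, hjB⟩ := mem_sdiff.mp hj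
  have hvj : 1 / 2 ≤ d v j := by
    by_contra h
    exact hjB (mem_filter.mpr ⟨hjP, by linarith⟩)
  have hbound : ∀ i ∈ cutBall d v P (1 / 2), d v i < 1 / 2 ∧ i ≠ j ∧ d v j ≤ d v i + d i j ∧
      d i j ≤ d v i + d v j := fun i hi =>
    ⟨(mem_filter.mp hi).2, fun h => hjB (h ▸ hi), htri v j i,
      by linarith [htri i j v, hsymm i v]⟩
  rcases lt_or_ge (d v j) (3 / 4) with hj34 | hj34
  · calc (0 : ℝ) ≤ ∑ i ∈ cutBall d v P (1 / 2), (1 / 4 - d v i) := by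
          rw [sum_sub_distrib, sum_const, nsmul_eq_mul]
          have : (#(cutBall d v P (1 / 2)) : ℝ) ≤ #(cutBall d v P (3 / 4)) := by
            exact_mod_cast hball_mono
          linarith
      _ ≤ ∑ i ∈ cutBall d v P (1 / 2), D i j := sum_le_sum fun i hi => by
          obtain ⟨-, hij, hlo, hhi⟩ := hbound i hi
          exact (ball_cut_weight_of_lt hvj hj34 hlo hhi).trans (hD i j hij)
  · refine sum_nonneg fun i hi => ?_
    obtain ⟨hvi, hij, hlo, -⟩ := hbound i hi
    exact (ball_cut_weight_of_ge hvi hj34 hlo (hle i j)).trans (hD i j hij)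

theorem sum_oneHalfCut_nonneg (hv : v ∈ P) (hvv : d v v = 0) (hsymm : ∀ u w, d u w = d w u)
    (htri : ∀ u w p, d u w ≤ d u p + d p w) (hle : ∀ u w, d u w ≤ 1)
    (hD : ∀ u w, u ≠ w → min (d u w - 1 / 4) (1 - d u w) ≤ D u w)
    {Q1 Q2 : Finset V} (hcut : (Q1, Q2) = oneHalfCut d P v) :
    0 ≤ ∑ i ∈ Q1, ∑ j ∈ Q2, D i j := by
  unfold oneHalfCut at hcut
  split_ifs at hcut with hC <;> obtain ⟨rfl, rfl⟩ := Prod.mk.inj hcut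
  · rw [sum_singleton]
    exact sum_singleton_cut_nonneg d D hv hvv (hle v) (hD v) hC
  · exact sum_ball_cut_nonneg d D hsymm htri hle hD (not_le.mp hC)

end CutBound

noncomputable def pairSurplus {V : Type*} (x : ℕ → V → V → ℝ) (tlay : V → V → ℕ) (t : ℕ)
    (i j : V) : ℝ :=
  if x t i j < 1 then
    (1 - x (tlay i j) i j) + x (tlay i j + 1) i j
      + (if x (tlay i j) i j < 1 then 1 / 4 else 0) - 1 / 4
  else 0

lemma sum_pairSurplus_eq {V : Type*} (x : ℕ → V → V → ℝ) (tlay : V → V → ℕ) (t : ℕ)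
    (Q1 Q2 : Finset V) :
    ∑ i ∈ Q1, ∑ j ∈ Q2, pairSurplus x tlay t i j =
      (∑ p ∈ (Q1 ×ˢ Q2).filter (fun p => x t p.1 p.2 < 1),
        ((1 - x (tlay p.1 p.2) p.1 p.2) + x (tlay p.1 p.2 + 1) p.1 p.2))
      + (1 / 4 : ℝ) *
          ((Q1 ×ˢ Q2).filter
            (fun p => x t p.1 p.2 < 1 ∧ x (tlay p.1 p.2) p.1 p.2 < 1)).card
      - (1 / 4 : ℝ) * ((Q1 ×ˢ Q2).filter (fun p => x t p.1 p.2 < 1)).card := by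
  rw [← sum_product', sum_filter, card_filter, card_filter]
  push_cast
  rw [mul_sum, mul_sum, ← sum_add_distrib, ← sum_sub_distrib]
  refine sum_congr rfl fun p _ => ?_
  unfold pairSurplus
  split_ifs <;> simp_all

lemma LPL0FeasibleFn.min_le_pairSurplus {V : Type*} {ℓ : ℕ} {x : ℕ → V → V → ℝ}
    (hfeas : LPL0FeasibleFn ℓ x) {tlay : V → V → ℕ} {t : ℕ} (ht : t ∈ Icc 1 ℓ) {i j : V}
    (hτ : tlay i j ∈ Icc 1 ℓ) :
    min (x t i j - 1 / 4) (1 - x t i j) ≤ pairSurplus x tlay t i j := by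
  have hτ_le := (hfeas.2.2.2.1 _ hτ i j).2
  have hτ_succ := hfeas.nonneg_succ_layer hτ i j
  have hmin_left := min_le_left (x t i j - 1 / 4) (1 - x t i j)
  have hmin_right := min_le_right (x t i j - 1 / 4) (1 - x t i j)
  rw [mem_Icc] at hτ ht
  unfold pairSurplus
  rcases le_or_gt t (tlay i j) with htτ | hτt
  · have := hfeas.le_of_le_layer ht.1 htτ hτ.2 i j
    split_ifs <;> linarith
  · have := hfeas.le_of_le_layer (by omega) hτt ht.2 i j
    split_ifs <;> linarith

theorem stmt11_general {V : Type*} [DecidableEq V]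
    (ℓ : ℕ)
    (x : ℕ → V → V → ℝ) (hfeas : LPL0FeasibleFn ℓ x)
    (tlay : V → V → ℕ)
    (htrange : ∀ u w : V, u ≠ w → tlay u w ∈ Finset.Icc 1 ℓ)
    (t : ℕ) (ht : t ∈ Finset.Icc 1 ℓ)
    (P : Finset V) (v : V) (hv : v ∈ P)
    (Q1 Q2 : Finset V) (hcut : (Q1, Q2) = oneHalfCut (x t) P v) :
    (∑ p ∈ (Q1 ×ˢ Q2).filter (fun p => x t p.1 p.2 < 1),
        ((1 - x (tlay p.1 p.2) p.1 p.2) + x (tlay p.1 p.2 + 1) p.1 p.2))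
      + (1 / 4 : ℝ) *
          ((Q1 ×ˢ Q2).filter
            (fun p => x t p.1 p.2 < 1 ∧ x (tlay p.1 p.2) p.1 p.2 < 1)).card
    ≥ (1 / 4 : ℝ) * ((Q1 ×ˢ Q2).filter (fun p => x t p.1 p.2 < 1)).card := by
  rw [ge_iff_le, ← sub_nonneg, ← sum_pairSurplus_eq x tlay t]
  exact sum_oneHalfCut_nonneg (x t) (pairSurplus x tlay t) hv (hfeas.2.1 t ht v)
    (hfeas.1 t ht) (hfeas.2.2.1 t ht) (fun u w => (hfeas.2.2.2.1 t ht u w).2)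
    (fun u w huw => hfeas.min_le_pairSurplus ht (htrange u w huw)) hcut

/-- Lemma A.2 (restated): for a feasible LP-(L0) solution `x`, a layer `t`, and
the pair `(Q1, Q2)` returned by One-Half-Refine-Cut at layer `t`:
`Σ_{{i,j}∈NFPrs₀(Q1,Q2)} Val_{i,j} + (1/4)|NFPrs₀(Q1,Q2) ∩ NFbd|
  ≥ (1/4)|NFPrs₀(Q1,Q2)|`,
where `Val_{i,j} = (1 − x^(t_{i,j})(i,j)) + x^(t_{i,j}+1)(i,j)` and
`NFbd = {{i,j} : x^(t_{i,j})(i,j) < 1}`. -/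
theorem stmt11 {V : Type*} [Fintype V] [DecidableEq V]
    (ℓ : ℕ) (hℓ : 1 ≤ ℓ)
    (x : ℕ → V → V → ℝ) (hfeas : LPL0FeasibleFn ℓ x)
    (tlay : V → V → ℕ) (htsym : ∀ u w, tlay u w = tlay w u)
    (htrange : ∀ u w : V, u ≠ w → tlay u w ∈ Finset.Icc 1 ℓ)
    (t : ℕ) (ht : t ∈ Finset.Icc 1 ℓ)
    (P : Finset V) (v : V) (hv : v ∈ P) (hmax : ∃ u ∈ P, 1 / 2 ≤ x t v u)
    (Q1 Q2 : Finset V) (hcut : (Q1, Q2) = oneHalfCut (x t) P v) :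
    (∑ p ∈ (Q1 ×ˢ Q2).filter (fun p => x t p.1 p.2 < 1),
        ((1 - x (tlay p.1 p.2) p.1 p.2) + x (tlay p.1 p.2 + 1) p.1 p.2))
      + (1 / 4 : ℝ) *
          ((Q1 ×ˢ Q2).filter
            (fun p => x t p.1 p.2 < 1 ∧ x (tlay p.1 p.2) p.1 p.2 < 1)).card
    ≥ (1 / 4 : ℝ) * ((Q1 ×ˢ Q2).filter (fun p => x t p.1 p.2 < 1)).card :=
  stmt11_general ℓ x hfeas tlay htrange t ht P v hv Q1 Q2 hcut
end
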